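/- Let K and H be closed subgroups of a compact Lie group G. If there exist g, g' ∈ G such that gKg⁻¹ ⊆ H and g'H(g')⁻¹ ⊆ K, then gKg⁻¹ = H and g'H(g')⁻¹ = K. -/

import Mathlib

/-!
The elements `a` with `a K a⁻¹ ≤ K` form a submonoid of `G`, closed when `K` is. In a compact
group a closed submonoid is a subgroup, since `a⁻¹` is a limit of powers of `a`. Hence
`a K a⁻¹ ≤ K` forces `a⁻¹ K a ≤ K`, i.e. `a K a⁻¹ = K`. Applied to `a = g' g`, the chain
`g' g K g⁻¹ g'⁻¹ ≤ g' H g'⁻¹ ≤ K` collapses to equalities.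
-/

theorem Submonoid.inv_mem_of_isClosed {G : Type*} [Group G] [TopologicalSpace G]
    [IsTopologicalGroup G] [CompactSpace G] {S : Submonoid G} (hS : IsClosed (S : Set G))
    {x : G} (hx : x ∈ S) : x⁻¹ ∈ S := by
  have hclosure : x⁻¹ ∈ _root_.closure (Submonoid.closure (S : Set G) : Set G) := by
    rw [closure_submonoidClosure_eq_closure_subgroupClosure]
    exact _root_.subset_closure (inv_mem (Subgroup.subset_closure hx))
  rwa [Submonoid.closure_eq, hS.closure_eq] at hclosure

namespace Subgroup

variable {G : Type*} [Group G]

theorem map_conj_one (K : Subgroup G) : K.map (MulAut.conj (1 : G)).toMonoidHom = K := by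
  convert K.map_id
  ext x
  simp

theorem map_conj_mul (K : Subgroup G) (a b : G) :
    K.map (MulAut.conj (a * b)).toMonoidHom =
      (K.map (MulAut.conj b).toMonoidHom).map (MulAut.conj a).toMonoidHom := by
  rw [map_map]
  congr 1
  ext x
  simp [MulAut.conj_apply, mul_assoc]

theorem map_conj_le_iff {K H : Subgroup G} {a : G} :
    K.map (MulAut.conj a).toMonoidHom ≤ H ↔ ∀ k ∈ K, a * k * a⁻¹ ∈ H := by
  simp [SetLike.le_def, MulAut.conj_apply]

def conjLeSubmonoid (K : Subgroup G) : Submonoid G where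
  carrier := {a | K.map (MulAut.conj a).toMonoidHom ≤ K}
  one_mem' := (map_conj_one K).le
  mul_mem' {a b} ha hb := by
    simp only [Set.mem_ofPred_eq, map_conj_mul] at ha hb ⊢
    exact (map_mono hb).trans ha

theorem isClosed_conjLeSubmonoid [TopologicalSpace G] [ContinuousMul G] [ContinuousInv G]
    {K : Subgroup G} (hK : IsClosed (K : Set G)) : IsClosed (K.conjLeSubmonoid : Set G) := by
  have hcarrier : (K.conjLeSubmonoid : Set G) = ⋂ k ∈ K, (fun a => a * k * a⁻¹) ⁻¹' K := by
    ext a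
    simp only [Set.mem_iInter, Set.mem_preimage, SetLike.mem_coe]
    exact map_conj_le_iff
  rw [hcarrier]
  exact isClosed_biInter fun k _ => hK.preimage (by fun_prop)

theorem map_conj_eq_of_map_conj_le [TopologicalSpace G] [IsTopologicalGroup G] [CompactSpace G]
    {K : Subgroup G} (hK : IsClosed (K : Set G)) {a : G}
    (h : K.map (MulAut.conj a).toMonoidHom ≤ K) : K.map (MulAut.conj a).toMonoidHom = K := by
  have hinv : K.map (MulAut.conj a⁻¹).toMonoidHom ≤ K :=
    Submonoid.inv_mem_of_isClosed (isClosed_conjLeSubmonoid hK)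
      (show a ∈ K.conjLeSubmonoid from h)
  refine le_antisymm h ?_
  calc K = K.map (MulAut.conj (a * a⁻¹)).toMonoidHom := by rw [mul_inv_cancel, map_conj_one]
    _ ≤ K.map (MulAut.conj a).toMonoidHom := by rw [map_conj_mul]; exact map_mono hinv

end Subgroup

theorem conj_subset_antisymm_of_compact_lieGroup_general
    {E : Type*} [NormedAddCommGroup E] [NormedSpace ℝ E]
    {M : Type*} [TopologicalSpace M] {I : ModelWithCorners ℝ E M}
    {G : Type*} [TopologicalSpace G] [ChartedSpace M G] [Group G] [LieGroup I (⊤ : ℕ∞) G]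
    [CompactSpace G]
    (K H : Subgroup G) (hK : IsClosed (K : Set G))
    (g g' : G)
    (h1 : Subgroup.map (MulAut.conj g).toMonoidHom K ≤ H)
    (h2 : Subgroup.map (MulAut.conj g').toMonoidHom H ≤ K) :
    Subgroup.map (MulAut.conj g).toMonoidHom K = H ∧
    Subgroup.map (MulAut.conj g').toMonoidHom H = K := by
  have : IsTopologicalGroup G := topologicalGroup_of_lieGroup I (⊤ : ℕ∞)
  have hround : (K.map (MulAut.conj g).toMonoidHom).map (MulAut.conj g').toMonoidHom = K := by
    rw [← Subgroup.map_conj_mul]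
    refine Subgroup.map_conj_eq_of_map_conj_le hK ?_
    rw [Subgroup.map_conj_mul]
    exact (Subgroup.map_mono h1).trans h2
  have hH : H.map (MulAut.conj g').toMonoidHom = K :=
    le_antisymm h2 (hround ▸ Subgroup.map_mono h1)
  exact ⟨Subgroup.map_injective (MulAut.conj g').injective (hround.trans hH.symm), hH⟩

/-- Closed subgroups of a compact Lie group that are mutually conjugate-included
are in fact conjugate. -/
theorem conj_subset_antisymm_of_compact_lieGroup
    {E : Type*} [NormedAddCommGroup E] [NormedSpace ℝ E] [FiniteDimensional ℝ E]
    {M : Type*} [TopologicalSpace M] {I : ModelWithCorners ℝ E M}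
    {G : Type*} [TopologicalSpace G] [ChartedSpace M G] [Group G] [LieGroup I (⊤ : ℕ∞) G]
    [CompactSpace G]
    (K H : Subgroup G) (hK : IsClosed (K : Set G)) (hH : IsClosed (H : Set G))
    (g g' : G)
    (h1 : Subgroup.map (MulAut.conj g).toMonoidHom K ≤ H)
    (h2 : Subgroup.map (MulAut.conj g').toMonoidHom H ≤ K) :
    Subgroup.map (MulAut.conj g).toMonoidHom K = H ∧
    Subgroup.map (MulAut.conj g').toMonoidHom H = K :=
  conj_subset_antisymm_of_compact_lieGroup_general (I := I) K H hK g g' h1 h2
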